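/- For all integers n ≥ 3 and 1 ≤ i ≤ n−2, there exists an even real-analytic function ρ̂_{n,i} : (−π,π) → ℝ such that ρ̂_{n,i}(θ) = ρ_{n,i}(−cos θ) for all θ ∈ (−π,π) \ {0}. -/

import Mathlib

open Real Set Filter Topology

/-- The Gauss hypergeometric function `₂F₁(a,b;c;x)`. -/
noncomputable def gaussHyp (a b c x : ℝ) : ℝ :=
  ∑' k : ℕ, ((ascPochhammer ℝ k).eval a * (ascPochhammer ℝ k).eval b /
      ((ascPochhammer ℝ k).eval c * (Nat.factorial k))) * x ^ k

/-- The function `ρ_{n,i}` on `(-1,1)`. -/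
noncomputable def rho (n i : ℕ) (t : ℝ) : ℝ :=
  (Real.Gamma i * Real.Gamma ((n : ℝ) - i - 1) /
      (4 * (2 * π) ^ (((n : ℝ) - 2) / 2) * Real.Gamma ((n : ℝ) / 2))) *
    (1 - t) ^ (-(((n : ℝ) - 2) / 2)) *
    gaussHyp ((n : ℝ) / 2 - i) ((i : ℝ) + 1 - (n : ℝ) / 2) ((n : ℝ) / 2) ((1 + t) / 2)

noncomputable def hypCoeff (a b c : ℝ) (k : ℕ) : ℝ :=
  (ascPochhammer ℝ k).eval a * (ascPochhammer ℝ k).eval b /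
      ((ascPochhammer ℝ k).eval c * (Nat.factorial k))

lemma hypCoeff_succ (a b c : ℝ) (hc : 0 < c) (k : ℕ) :
    hypCoeff a b c (k + 1) =
      hypCoeff a b c k * ((a + k) * (b + k) / ((c + k) * (k + 1))) := by
  have h1 : (0:ℝ) < (ascPochhammer ℝ k).eval c := ascPochhammer_pos k c hc
  have h2 : (0:ℝ) < c + k := by positivity
  have h3 : (0:ℝ) < (k.factorial : ℝ) := by positivity
  have h4 : (0:ℝ) < (k:ℝ) + 1 := by positivity
  simp only [hypCoeff, ascPochhammer_succ_eval, Nat.factorial_succ]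
  field_simp
  push_cast
  ring

lemma hypCoeff_ratio_tendsto (a b c : ℝ) (hc : 0 < c) :
    Tendsto (fun k : ℕ => |(a + k) * (b + k) / ((c + k) * (k + 1))|) atTop (𝓝 1) := by
  have hden : Tendsto (fun k : ℕ => c + (k:ℝ)) atTop atTop :=
    tendsto_atTop_add_const_left _ c tendsto_natCast_atTop_atTop
  have hden' : Tendsto (fun k : ℕ => (k:ℝ) + 1) atTop atTop :=
    tendsto_atTop_add_const_right _ 1 tendsto_natCast_atTop_atTop
  have h1 : Tendsto (fun k : ℕ => (a + k) / (c + k)) atTop (𝓝 1) := by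
    have he : (fun k : ℕ => (a + (k:ℝ)) / (c + k)) = fun k : ℕ => 1 + (a - c) / (c + k) := by
      funext k
      have : c + (k:ℝ) ≠ 0 := by positivity
      field_simp
      ring
    rw [he]
    simpa using tendsto_const_nhds.add (Tendsto.div_atTop (tendsto_const_nhds (x := a - c)) hden)
  have h2 : Tendsto (fun k : ℕ => (b + k) / ((k:ℝ) + 1)) atTop (𝓝 1) := by
    have he : (fun k : ℕ => (b + (k:ℝ)) / ((k:ℝ) + 1)) = fun k : ℕ => 1 + (b - 1) / ((k:ℝ) + 1) := by
      funext k
      have : (k:ℝ) + 1 ≠ 0 := by positivity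
      field_simp
      ring
    rw [he]
    simpa using tendsto_const_nhds.add (Tendsto.div_atTop (tendsto_const_nhds (x := b - 1)) hden')
  have := (h1.mul h2).abs
  simp only [div_mul_div_comm] at this
  simpa using this

lemma gaussHyp_analyticAt (a b c : ℝ) (hc : 0 < c) {x : ℝ} (hx : |x| < 1) :
    AnalyticAt ℝ (gaussHyp a b c) x := by
  set p := FormalMultilinearSeries.ofScalars ℝ (hypCoeff a b c) with hp
  have hrad : (1 : ENNReal) ≤ p.radius := by
    apply ENNReal.le_of_forall_nnreal_lt
    intro r hr
    have hr1 : (r : ℝ) < 1 := by exact_mod_cast hr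
    apply p.le_radius_of_summable_norm
    have heq : (fun n => ‖p n‖ * (r:ℝ) ^ n) = fun n => ‖hypCoeff a b c n‖ * (r:ℝ) ^ n := by
      funext n; rw [hp, FormalMultilinearSeries.ofScalars_norm]
    rw [heq]
    set R := ((r:ℝ) + 1) / 2 with hR
    have hR1 : R < 1 := by rw [hR]; linarith
    have hrR : (r:ℝ) < R := by rw [hR]; linarith
    apply summable_of_ratio_norm_eventually_le hR1
    have hq := (hypCoeff_ratio_tendsto a b c hc).mul_const (r:ℝ)
    rw [one_mul] at hq
    filter_upwards [hq.eventually_le_const hrR] with k hk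
    have hstep := hypCoeff_succ a b c hc k
    have hnn : (0:ℝ) ≤ ‖hypCoeff a b c k‖ * (r:ℝ) ^ k := by positivity
    calc ‖‖hypCoeff a b c (k+1)‖ * (r:ℝ) ^ (k+1)‖
        = (‖hypCoeff a b c k‖ * (r:ℝ) ^ k) *
            (|(a + k) * (b + k) / ((c + k) * (k + 1))| * (r:ℝ)) := by
          rw [hstep, norm_mul, norm_norm, norm_mul]
          simp only [Real.norm_eq_abs, abs_pow]
          rw [abs_of_nonneg r.coe_nonneg, pow_succ]
          ring
      _ ≤ (‖hypCoeff a b c k‖ * (r:ℝ) ^ k) * R := by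
          exact mul_le_mul_of_nonneg_left hk hnn
      _ = R * ‖‖hypCoeff a b c k‖ * (r:ℝ) ^ k‖ := by
          simp only [Real.norm_eq_abs, abs_mul, abs_abs, abs_pow, NNReal.abs_eq]
          ring
  have h0 : 0 < p.radius := lt_of_lt_of_le one_pos hrad
  have hball := p.hasFPowerSeriesOnBall h0
  have hmem : x ∈ Metric.eball (0:ℝ) p.radius := by
    rw [mem_emetric_ball_zero_iff]
    calc (‖x‖₊ : ENNReal) < 1 := by
          rw [← ENNReal.coe_one, ENNReal.coe_lt_coe, ← NNReal.coe_lt_coe]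
          simpa using hx
      _ ≤ p.radius := hrad
  have hsum : gaussHyp a b c = p.sum := by
    funext y
    rw [gaussHyp]
    calc ∑' k : ℕ, ((ascPochhammer ℝ k).eval a * (ascPochhammer ℝ k).eval b /
          ((ascPochhammer ℝ k).eval c * (Nat.factorial k))) * y ^ k
        = ∑' n : ℕ, hypCoeff a b c n • y ^ n := tsum_congr fun n => by
          rw [hypCoeff, smul_eq_mul]
      _ = p.sum y := (FormalMultilinearSeries.ofScalars_sum_eq (hypCoeff a b c) y).symm
  rw [hsum]
  exact hball.analyticAt_of_mem hmem

lemma analyticAt_rlog {x : ℝ} (hx : 0 < x) : AnalyticAt ℝ Real.log x := by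
  have h : Real.log = fun y : ℝ => Complex.reCLM (Complex.log (Complex.ofRealCLM y)) := by
    funext y; simp [Complex.log_ofReal_re]
  rw [h]
  exact (Complex.reCLM.analyticAt _).comp
    (((analyticAt_clog (Complex.ofReal_mem_slitPlane.2 hx)).restrictScalars).comp
      (Complex.ofRealCLM.analyticAt _))

lemma analyticAt_rcos (x : ℝ) : AnalyticAt ℝ Real.cos x := by
  have h : Real.cos = fun y : ℝ => Complex.reCLM (Complex.cos (Complex.ofRealCLM y)) := by
    funext y; simp [Complex.cos_ofReal_re]
  have hc : AnalyticAt ℂ Complex.cos (x : ℂ) := by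
    rw [Complex.analyticAt_iff_eventually_differentiableAt]
    exact Eventually.of_forall fun z => Complex.differentiable_cos z
  rw [h]
  exact (Complex.reCLM.analyticAt _).comp
    ((hc.restrictScalars).comp (Complex.ofRealCLM.analyticAt _))

lemma neg_one_lt_cos_of_mem {θ : ℝ} (hθ : θ ∈ Set.Ioo (-π) π) : -1 < Real.cos θ := by
  obtain ⟨h1, h2⟩ := hθ
  have hhalf : θ / 2 ∈ Set.Ioo (-(π/2)) (π/2) := by
    constructor <;> [linarith; linarith]
  have hpos : 0 < Real.cos (θ / 2) := Real.cos_pos_of_mem_Ioo hhalf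
  have hsq := Real.cos_sq (θ / 2)
  have h2θ : 2 * (θ / 2) = θ := by ring
  rw [h2θ] at hsq
  nlinarith [sq_nonneg (Real.cos (θ / 2))]

/-- `ρ_{n,i}`, after the substitution `t = -cos θ`, extends to an even real-analytic function
on `(-π, π)`. -/
theorem stmt_16 (n i : ℕ) (hn : 3 ≤ n) (hi1 : 1 ≤ i) (hi2 : i ≤ n - 2) :
    ∃ f : ℝ → ℝ,
      (∀ θ ∈ Set.Ioo (-π) π, AnalyticAt ℝ f θ) ∧
      (∀ θ ∈ Set.Ioo (-π) π, f (-θ) = f θ) ∧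
      (∀ θ ∈ Set.Ioo (-π) π, θ ≠ 0 → f θ = rho n i (-Real.cos θ)) := by
  refine ⟨fun θ => rho n i (-Real.cos θ), ?_, ?_, ?_⟩
  · intro θ hθ
    have hcos := neg_one_lt_cos_of_mem hθ
    have hn3 : (3:ℝ) ≤ (n:ℝ) := by exact_mod_cast hn
    have hc : (0:ℝ) < (n:ℝ) / 2 := by linarith
    simp only [rho]
    apply AnalyticAt.mul
    · apply AnalyticAt.mul analyticAt_const
      -- rpow term
      have hbase : AnalyticAt ℝ (fun θ : ℝ => 1 - -Real.cos θ) θ :=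
        analyticAt_const.sub (analyticAt_rcos θ).neg
      have hposθ : (0:ℝ) < 1 - -Real.cos θ := by linarith
      have hlog : AnalyticAt ℝ (fun θ : ℝ => Real.log (1 - -Real.cos θ)) θ :=
        AnalyticAt.comp (f := fun θ : ℝ => 1 - -Real.cos θ) (x := θ)
          (analyticAt_rlog hposθ) hbase
      have hg := (hlog.mul (analyticAt_const (v := -(((n:ℝ) - 2) / 2)))).rexp
      apply hg.congr
      have hopen : IsOpen {θ : ℝ | -1 < Real.cos θ} :=
        isOpen_lt continuous_const Real.continuous_cos
      filter_upwards [hopen.mem_nhds hcos] with ψ hψ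
      have hψ' : (0:ℝ) < 1 - -Real.cos ψ := by
        have : -1 < Real.cos ψ := hψ
        linarith
      rw [Real.rpow_def_of_pos hψ']
      rfl
    · -- gauss term
      have hmap : AnalyticAt ℝ (fun θ : ℝ => (1 + -Real.cos θ) / 2) θ :=
        (analyticAt_const.add (analyticAt_rcos θ).neg).div analyticAt_const two_ne_zero
      have hle := Real.cos_le_one θ
      have hx : |(1 + -Real.cos θ) / 2| < 1 := by
        rw [abs_lt]; constructor <;> [linarith; linarith]
      exact AnalyticAt.comp (f := fun θ : ℝ => (1 + -Real.cos θ) / 2) (x := θ)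
        (gaussHyp_analyticAt _ _ _ hc hx) hmap
  · intro θ _
    simp [Real.cos_neg]
  · intro θ _ _
    rfl
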